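/- arXiv:math/0301263 — 2 statements merged into one kernel-verified Lean document; each statement's English description precedes it below -/
import Mathlib

section
/- Let A be a real normed algebra (‖ab‖ = ‖a‖‖b‖ for the norm of an inner product) with left identity 1, and let H = 1^⊥ be the orthogonal complement of 1. Then for h ∈ H and any a ∈ A, left multiplication satisfies h(ha) = -‖h‖² a; more generally (h₁h₂ + h₂h₁)a = -2⟨h₁,h₂⟩ a for h₁, h₂ ∈ H, so that A is a module over the Clifford algebra C(H). -/
/-!
Polarizing `‖ab‖² = ‖a‖²‖b‖²` in both arguments gives
`⟪ab, cd⟫ + ⟪ad, cb⟫ = 2⟪a, c⟫⟪b, d⟫`. Taking `c = 1` shows that left multiplication by any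
`h ⊥ 1` is skew-adjoint, so `⟪h₁(h₂a) + h₂(h₁a), v⟫ = -⟪h₂a, h₁v⟫ - ⟪h₁a, h₂v⟫`, and the
polarized identity once more evaluates this to `-2⟪h₁, h₂⟫⟪a, v⟫`.
-/

open scoped RealInnerProductSpace

namespace CompositionAlgebra

variable {A : Type*} [NormedAddCommGroup A] [InnerProductSpace ℝ A]
  {mul : A →ₗ[ℝ] A →ₗ[ℝ] A}

theorem inner_mul_mul_self (hcomp : ∀ a b : A, ‖mul a b‖ = ‖a‖ * ‖b‖) (a b : A) :
    ⟪mul a b, mul a b⟫ = ⟪a, a⟫ * ⟪b, b⟫ := by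
  simp only [real_inner_self_eq_norm_sq, hcomp, mul_pow]

theorem inner_mul_mul_of_right_eq (hcomp : ∀ a b : A, ‖mul a b‖ = ‖a‖ * ‖b‖) (a c b : A) :
    ⟪mul a b, mul c b⟫ = ⟪a, c⟫ * ⟪b, b⟫ := by
  have hac := inner_mul_mul_self hcomp (a + c) b
  simp only [map_add, LinearMap.add_apply, inner_add_add_self,
    real_inner_comm (mul a b) (mul c b), real_inner_comm a c] at hac
  linarith [inner_mul_mul_self hcomp a b, inner_mul_mul_self hcomp c b]

theorem inner_mul_mul_add_inner_mul_mul_swap (hcomp : ∀ a b : A, ‖mul a b‖ = ‖a‖ * ‖b‖)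
    (a c b d : A) :
    ⟪mul a b, mul c d⟫ + ⟪mul a d, mul c b⟫ = 2 * ⟪a, c⟫ * ⟪b, d⟫ := by
  have hbd := inner_mul_mul_of_right_eq hcomp a c (b + d)
  simp only [map_add, inner_add_left, inner_add_right] at hbd
  linear_combination hbd - inner_mul_mul_of_right_eq hcomp a c b
    - inner_mul_mul_of_right_eq hcomp a c d - ⟪a, c⟫ * real_inner_comm d b

theorem inner_mul_left_eq_neg_of_inner_eq_zero (hcomp : ∀ a b : A, ‖mul a b‖ = ‖a‖ * ‖b‖)
    {e : A} (he : ∀ a : A, mul e a = a) {h : A} (hh : ⟪h, e⟫ = 0) (b d : A) :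
    ⟪mul h b, d⟫ = -⟪mul h d, b⟫ := by
  have := inner_mul_mul_add_inner_mul_mul_swap hcomp h e b d
  rw [he, he, hh] at this
  linarith

theorem mul_mul_add_mul_mul_eq_of_inner_eq_zero (hcomp : ∀ a b : A, ‖mul a b‖ = ‖a‖ * ‖b‖)
    {e : A} (he : ∀ a : A, mul e a = a) {h₁ h₂ : A} (h₁e : ⟪h₁, e⟫ = 0) (h₂e : ⟪h₂, e⟫ = 0)
    (a : A) :
    mul h₁ (mul h₂ a) + mul h₂ (mul h₁ a) = (-(2 * ⟪h₁, h₂⟫)) • a := by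
  refine ext_inner_right ℝ fun v => ?_
  rw [inner_add_left, inner_mul_left_eq_neg_of_inner_eq_zero hcomp he h₁e,
    inner_mul_left_eq_neg_of_inner_eq_zero hcomp he h₂e, real_inner_smul_left]
  linear_combination -inner_mul_mul_add_inner_mul_mul_swap hcomp h₁ h₂ v a
    + real_inner_comm (mul h₂ v) (mul h₁ a) - 2 * ⟪h₁, h₂⟫ * real_inner_comm a v

end CompositionAlgebra

open CompositionAlgebra in
theorem stmt17 (A : Type*) [NormedAddCommGroup A] [InnerProductSpace ℝ A]
    (mul : A →ₗ[ℝ] A →ₗ[ℝ] A)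
    (hcomp : ∀ a b : A, ‖mul a b‖ = ‖a‖ * ‖b‖)
    (e : A) (he : ∀ a : A, mul e a = a) :
    (∀ (h a : A), ⟪h, e⟫ = 0 → mul h (mul h a) = -(‖h‖ ^ 2) • a) ∧
    (∀ (h₁ h₂ a : A), ⟪h₁, e⟫ = 0 → ⟪h₂, e⟫ = 0 →
      mul h₁ (mul h₂ a) + mul h₂ (mul h₁ a) = (-(2 * ⟪h₁, h₂⟫)) • a) := by
  refine ⟨fun h a hh => ?_, fun h₁ h₂ a h₁e h₂e =>
    mul_mul_add_mul_mul_eq_of_inner_eq_zero hcomp he h₁e h₂e a⟩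
  have hsq := mul_mul_add_mul_mul_eq_of_inner_eq_zero hcomp he hh hh a
  rw [← two_smul ℝ, real_inner_self_eq_norm_sq, neg_mul_eq_mul_neg, mul_smul] at hsq
  exact smul_right_injective A two_ne_zero hsq
end

section
/- Let V be a (real or complex) inner product module over the Clifford algebra C(H) of a real inner product space H, acting by isometries on unit vectors (‖h·v‖ = ‖h‖‖v‖). Fix a linear isometric identification V ≅ H ⊕ R·1 and define (h + c·1) ⋆ a = h·a + c·a for h ∈ H, c ∈ R, a ∈ V. Then ⋆ satisfies ‖u ⋆ v‖ = ‖u‖ ‖v‖ for all u, v, and every nonzero u has a left inverse: there exists u⁻¹ with u⁻¹ ⋆ (u ⋆ v) = v for all v. -/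
open scoped RealInnerProductSpace

theorem stmt18 (H V : Type*)
    [NormedAddCommGroup H] [InnerProductSpace ℝ H]
    [NormedAddCommGroup V] [InnerProductSpace ℝ V]
    -- the Clifford action of `H` on `V`
    (act : H →ₗ[ℝ] V →ₗ[ℝ] V)
    (hclif : ∀ (h h' : H) (v : V),
      act h (act h' v) + act h' (act h v) = (-(2 * ⟪h, h'⟫)) • v)
    (hnorm : ∀ (h : H) (v : V), ‖act h v‖ = ‖h‖ * ‖v‖)
    (hskew : ∀ (h : H) (v w : V), ⟪act h v, w⟫ = -⟪v, act h w⟫)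
    -- an isometric linear identification `V ≅ H ⊕ ℝ·1`, given by `v ↦ (P v, c v)`
    (P : V →ₗ[ℝ] H) (c : V →ₗ[ℝ] ℝ)
    (hbij : Function.Bijective (fun v : V => (P v, c v)))
    (hiso : ∀ v : V, ‖v‖ ^ 2 = ‖P v‖ ^ 2 + (c v) ^ 2) :
    -- the product `(h + c·1) ⋆ a = h·a + c·a` is a composition of quadratic forms
    (∀ u v : V, ‖act (P u) v + c u • v‖ = ‖u‖ * ‖v‖) ∧
    -- and every nonzero element has a left inverse
    (∀ u : V, u ≠ 0 → ∃ w : V, ∀ v : V,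
      act (P w) (act (P u) v + c u • v) + c w • (act (P u) v + c u • v) = v) := by
  have horth : ∀ (h : H) (v : V), ⟪act h v, v⟫ = 0 := by
    intro h v
    have h1 := hskew h v v
    have h2 : ⟪(act h) v, v⟫ = ⟪v, (act h) v⟫ := real_inner_comm _ _
    linarith [h1, h2.symm ▸ h1]
  constructor
  · intro u v
    have hsq : ‖act (P u) v + c u • v‖ ^ 2 = (‖u‖ * ‖v‖) ^ 2 := by
      rw [norm_add_sq_real]
      have h0 : ⟪act (P u) v, c u • v⟫ = 0 := by
        rw [real_inner_smul_right, horth]; ring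
      rw [h0, hnorm, norm_smul, Real.norm_eq_abs]
      have h5 := hiso u
      rw [mul_pow, mul_pow, mul_pow, sq_abs, h5]
      ring
    have hnn1 : (0:ℝ) ≤ ‖act (P u) v + c u • v‖ := norm_nonneg _
    have hnn2 : (0:ℝ) ≤ ‖u‖ * ‖v‖ := by positivity
    nlinarith [hsq, hnn1, hnn2]
  · intro u hu
    set s : ℝ := ‖u‖ ^ 2 with hs
    have hsne : s ≠ 0 := by
      simp [hs, pow_eq_zero_iff, norm_eq_zero, hu]
    obtain ⟨w, hw⟩ := hbij.2 ((-s⁻¹) • P u, s⁻¹ * c u)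
    have hPw : P w = (-s⁻¹) • P u := (Prod.mk.injEq _ _ _ _ ▸ hw).1
    have hcw : c w = s⁻¹ * c u := (Prod.mk.injEq _ _ _ _ ▸ hw).2
    refine ⟨w, fun v => ?_⟩
    have key : act (P u) (act (P u) v) = (-(‖P u‖ ^ 2)) • v := by
      have h1 := hclif (P u) (P u) v
      have h2 : ⟪P u, P u⟫ = ‖P u‖ ^ 2 := real_inner_self_eq_norm_sq _
      have h3 : act (P u) (act (P u) v) + act (P u) (act (P u) v)
          = ((2:ℝ)) • act (P u) (act (P u) v) := by
        rw [two_smul]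
      rw [h2] at h1
      have := h3 ▸ h1
      have h4 : ((2:ℝ)) • act (P u) (act (P u) v) = ((2:ℝ)) • ((-(‖P u‖ ^ 2)) • v) := by
        rw [this, smul_smul]; ring_nf
      exact smul_right_injective V (by norm_num) h4
    rw [hPw, hcw]
    simp only [map_smul, LinearMap.neg_apply, LinearMap.smul_apply, map_add, key, smul_add,
      smul_smul, neg_smul, smul_neg, map_neg, neg_neg]
    have hiso' : s = ‖P u‖ ^ 2 + (c u) ^ 2 := hiso u
    match_scalars
    · field_simp
      linarith [hiso']
    · field_simp
      ring
end
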